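/- With S(ν) the coarse projection and μ^{k+1/2} = D(μ^k) z(C(μ^k)) the IAD coarse correction from iterate μ^k > 0, one has μ^{k+1/2} − μ = (I − S(μ^k))(μ^k − μ). -/

import Mathlib

/-!
Write `B = A (I - P + μ𝟙ᵀ)` and `M = B D(ν)`, so that `S(ν) = D(ν) M⁻¹ B`. Once `M` is
invertible the identity is algebra: `D(μᵏ) A μᵏ = μᵏ` gives `B μᵏ = M (A μᵏ)`, while `P μ = μ`
and `C(μᵏ) zᵏ = zᵏ` give `B μ = A μ = M zᵏ`; hence `S(μᵏ) (μᵏ - μ) = D(μᵏ) (A μᵏ - zᵏ)`.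

Invertibility is the real content. Since `M v = v - C v + (𝟙ᵀ v) A μ` and `𝟙ᵀ M = 𝟙ᵀ`,
`M v = 0` forces `𝟙ᵀ v = 0` and `C v = v`. The coarse matrix `C(μᵏ)` is column stochastic and,
because aggregation maps positive entries of `P` to positive entries of `C`, irreducible; a
Perron–Frobenius argument then leaves only `v = 0`.
-/

open Matrix BigOperators

/-- A matrix is column stochastic: nonnegative entries, each column sums to one. -/
def ColStoch {m : Type*} [Fintype m] (M : Matrix m m ℝ) : Prop :=
  (∀ i j, 0 ≤ M i j) ∧ ∀ j, ∑ i, M i j = 1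

/-- Irreducibility of a matrix via its pattern of nonzero entries:
the associated directed graph is strongly connected. -/
def Irred {m : Type*} [Fintype m] [DecidableEq m] (M : Matrix m m ℝ) : Prop :=
  ∀ i j, ∃ k : ℕ, 0 < k ∧ (M ^ k) i j ≠ 0

/-- Weighted inner product `⟨x,y⟩_w = ∑ i, x i * y i * w i`. -/
def innerW {m : Type*} [Fintype m] (w x y : m → ℝ) : ℝ := ∑ i, x i * y i * w i

/-- Weighted `ℓ²(w)` norm. -/
noncomputable def normW {m : Type*} [Fintype m] (w x : m → ℝ) : ℝ :=
  Real.sqrt (innerW w x x)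

/-- Operator norm of a matrix with respect to the `ℓ²(w)` norm. -/
noncomputable def opNormW {m : Type*} [Fintype m] (w : m → ℝ) (M : Matrix m m ℝ) : ℝ :=
  sInf {c | 0 ≤ c ∧ ∀ x, normW w (M.mulVec x) ≤ c * normW w x}

/-- Aggregation operator for the partition `{f⁻¹(i)}` of `Fin N`. -/
def Agg {N n : ℕ} (f : Fin N → Fin n) : Matrix (Fin n) (Fin N) ℝ :=
  fun i x => if f x = i then 1 else 0

/-- Disaggregation operator for the partition `{f⁻¹(i)}` and weight vector ν. -/
noncomputable def Disagg {N n : ℕ} (f : Fin N → Fin n) (ν : Fin N → ℝ) :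
    Matrix (Fin N) (Fin n) ℝ :=
  fun j i => if f j = i then ν j / (Agg f).mulVec ν i else 0

/-- Coarse approximation `C(ν) = A P D(ν)`. -/
noncomputable def CoarseC {N n : ℕ} (P : Matrix (Fin N) (Fin N) ℝ) (f : Fin N → Fin n)
    (ν : Fin N → ℝ) : Matrix (Fin n) (Fin n) ℝ := Agg f * P * Disagg f ν

/-- `P̂ = P - μ 𝟙ᵀ`. -/
def hatP {N : ℕ} (P : Matrix (Fin N) (Fin N) ℝ) (μ : Fin N → ℝ) :
    Matrix (Fin N) (Fin N) ℝ := P - vecMulVec μ 1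

/-- Coarse projection `S(ν) = D(ν)[A(I-P+μ𝟙ᵀ)D(ν)]⁻¹ A(I-P+μ𝟙ᵀ)`. -/
noncomputable def CoarseS {N n : ℕ} (P : Matrix (Fin N) (Fin N) ℝ) (f : Fin N → Fin n)
    (μ ν : Fin N → ℝ) : Matrix (Fin N) (Fin N) ℝ :=
  Disagg f ν * (Agg f * (1 - P + vecMulVec μ 1) * Disagg f ν)⁻¹ *
    (Agg f * (1 - P + vecMulVec μ 1))

/-- Orthogonal coarse projection `Π(ν) = D(ν) A`. -/
noncomputable def PiProj {N n : ℕ} (f : Fin N → Fin n) (ν : Fin N → ℝ) :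
    Matrix (Fin N) (Fin N) ℝ := Disagg f ν * Agg f

/-- Error propagation operator `J(ν) = P̂ (I - S(ν))`. -/
noncomputable def Jop {N n : ℕ} (P : Matrix (Fin N) (Fin N) ℝ) (f : Fin N → Fin n)
    (μ ν : Fin N → ℝ) : Matrix (Fin N) (Fin N) ℝ := hatP P μ * (1 - CoarseS P f μ ν)

/-- Spectrum (set of complex eigenvalues) of a real matrix. -/
noncomputable def specC {N : ℕ} (M : Matrix (Fin N) (Fin N) ℝ) : Set ℂ :=
  spectrum ℂ (M.map (Complex.ofReal))

/-- Spectral radius of a real matrix. -/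
noncomputable def specRad {N : ℕ} (M : Matrix (Fin N) (Fin N) ℝ) : ℝ :=
  sSup ((fun z : ℂ => ‖z‖) '' specC M)

/-- The `ℓ²(1/μ)`-adjoint `diag(μ) Mᵀ diag(1/μ)`. -/
noncomputable def adjW {N : ℕ} (μ : Fin N → ℝ) (M : Matrix (Fin N) (Fin N) ℝ) :
    Matrix (Fin N) (Fin N) ℝ :=
  Matrix.diagonal μ * Mᵀ * Matrix.diagonal (fun i => (μ i)⁻¹)

/-- The ε-inner product `⟨x,y⟩_ε = ⟨x,(I-Π(μ))y⟩_{1/μ} + ε ⟨x,Π(μ)y⟩_{1/μ}`. -/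
noncomputable def innerEps {N n : ℕ} (f : Fin N → Fin n) (μ : Fin N → ℝ) (ε : ℝ)
    (x y : Fin N → ℝ) : ℝ :=
  innerW (fun i => (μ i)⁻¹) x ((1 - PiProj f μ).mulVec y) +
    ε * innerW (fun i => (μ i)⁻¹) x ((PiProj f μ).mulVec y)

/-- The ε-norm. -/
noncomputable def normEps {N n : ℕ} (f : Fin N → Fin n) (μ : Fin N → ℝ) (ε : ℝ)
    (x : Fin N → ℝ) : ℝ := Real.sqrt (innerEps f μ ε x x)

/-- Operator norm induced by the ε-norm. -/
noncomputable def opNormEps {N n : ℕ} (f : Fin N → Fin n) (μ : Fin N → ℝ) (ε : ℝ)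
    (M : Matrix (Fin N) (Fin N) ℝ) : ℝ :=
  sInf {c | 0 ≤ c ∧ ∀ x, normEps f μ ε (M.mulVec x) ≤ c * normEps f μ ε x}

open Finset

section ColumnSums

variable {l m : Type*} [Fintype l]

lemma one_vecMul_eq_one_iff {M : Matrix l m ℝ} :
    (1 : l → ℝ) ᵥ* M = 1 ↔ ∀ j, ∑ i, M i j = 1 := by
  simp [funext_iff, vecMul, dotProduct]

lemma sum_mulVec_of_one_vecMul [Fintype m] {M : Matrix l m ℝ} (hM : (1 : l → ℝ) ᵥ* M = 1)
    (v : m → ℝ) :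
    ∑ i, (M *ᵥ v) i = ∑ j, v j := by
  rw [← one_dotProduct, dotProduct_mulVec, hM, one_dotProduct]

end ColumnSums

section PerronFrobenius

variable {m : Type*} [Fintype m] {C : Matrix m m ℝ}

lemma mulVec_pow_eq_self [DecidableEq m] {x : m → ℝ} (hx : C *ᵥ x = x) (k : ℕ) :
    (C ^ k) *ᵥ x = x := by
  induction k with
  | zero => rw [pow_zero, one_mulVec]
  | succ k ih => rw [pow_succ, ← mulVec_mulVec, hx, ih]

lemma Irred.pos_of_mulVec_eq_self [DecidableEq m] (hirr : Irred C) (hC : ∀ i j, 0 ≤ C i j)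
    {y : m → ℝ} (hy : 0 ≤ y) (hCy : C *ᵥ y = y) {i₀ : m} (hi₀ : 0 < y i₀) (j : m) : 0 < y j := by
  obtain ⟨k, -, hk⟩ := hirr j i₀
  rw [← mulVec_pow_eq_self hCy k]
  calc 0 < (C ^ k) j i₀ * y i₀ := mul_pos ((pow_apply_nonneg hC k j i₀).lt_of_ne' hk) hi₀
    _ ≤ ∑ l, (C ^ k) j l * y l :=
      single_le_sum (f := fun l => (C ^ k) j l * y l)
        (fun l _ => mul_nonneg (pow_apply_nonneg hC k j l) (hy l)) (mem_univ i₀)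

-- Each `|x i| ≤ (C *ᵥ |x|) i`, and both sides have the same total mass.
lemma ColStoch.mulVec_abs_eq (hC : ColStoch C) {x : m → ℝ} (hx : C *ᵥ x = x) :
    C *ᵥ |x| = |x| := by
  have hle : ∀ i, |x i| ≤ (C *ᵥ |x|) i := fun i =>
    calc |x i| = |∑ j, C i j * x j| := by nth_rw 1 [← hx]; rfl
      _ ≤ ∑ j, |C i j * x j| := abs_sum_le_sum_abs _ _
      _ = (C *ᵥ |x|) i := by simp [mulVec, dotProduct, abs_mul, abs_of_nonneg (hC.1 _ _)]
  have hsum : ∑ i, |x i| = ∑ i, (C *ᵥ |x|) i := by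
    rw [sum_mulVec_of_one_vecMul (one_vecMul_eq_one_iff.mpr hC.2)]; rfl
  funext i
  exact ((sum_eq_sum_iff_of_le fun i _ => hle i).mp hsum i (mem_univ i)).symm

-- `|x| + x` is a nonnegative fixed vector that vanishes exactly where `x < 0`.
lemma ColStoch.eq_zero_of_mulVec_eq_self_of_sum_eq_zero [DecidableEq m] (hC : ColStoch C)
    (hirr : Irred C) {x : m → ℝ} (hx : C *ᵥ x = x) (hs : ∑ i, x i = 0) : x = 0 := by
  by_contra hne
  obtain ⟨i, hi⟩ := Function.ne_iff.mp hne
  obtain ⟨j, -, hj⟩ := exists_pos_of_sum_zero_of_exists_nonzero x hs ⟨i, mem_univ i, hi⟩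
  obtain ⟨j', -, hj'⟩ := exists_pos_of_sum_zero_of_exists_nonzero (-x)
    (by simp [sum_neg_distrib, hs]) ⟨i, mem_univ i, by simpa using hi⟩
  have hpos := hirr.pos_of_mulVec_eq_self hC.1 (y := |x| + x)
    (fun i => by simpa [← neg_le_iff_add_nonneg'] using neg_abs_le (x i))
    (by rw [mulVec_add, hC.mulVec_abs_eq hx, hx])
    (i₀ := j) (by simp [abs_of_pos hj, hj]) j'
  simp only [Pi.add_apply, Pi.abs_apply, Pi.neg_apply, neg_pos] at hpos hj'
  rw [abs_of_neg hj'] at hpos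
  linarith

end PerronFrobenius

section Positivity

variable {l m o : Type*} [Fintype m]

lemma mul_apply_nonneg {X : Matrix l m ℝ} {Y : Matrix m o ℝ} (hX : ∀ i j, 0 ≤ X i j)
    (hY : ∀ i j, 0 ≤ Y i j) (i : l) (j : o) : 0 ≤ (X * Y) i j :=
  sum_nonneg fun k _ => mul_nonneg (hX i k) (hY k j)

lemma mul_apply_pos {X : Matrix l m ℝ} {Y : Matrix m o ℝ} (hX : ∀ i j, 0 ≤ X i j)
    (hY : ∀ i j, 0 ≤ Y i j) {i : l} {k : m} {j : o} (hik : 0 < X i k) (hkj : 0 < Y k j) :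
    0 < (X * Y) i j :=
  (mul_pos hik hkj).trans_le <| single_le_sum (f := fun k => X i k * Y k j)
    (fun k _ => mul_nonneg (hX i k) (hY k j)) (mem_univ k)

lemma pow_apply_pos_comp [DecidableEq m] [Fintype o] [DecidableEq o] {X : Matrix m m ℝ}
    {Y : Matrix o o ℝ} (g : m → o) (hX : ∀ i j, 0 ≤ X i j) (hY : ∀ i j, 0 ≤ Y i j)
    (hXY : ∀ i j, 0 < X i j → 0 < Y (g i) (g j)) (k : ℕ) {i j : m} (hk : 0 < (X ^ k) i j) :
    0 < (Y ^ k) (g i) (g j) := by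
  induction k generalizing j with
  | zero =>
    obtain rfl : i = j := by by_contra h; simp [one_apply_ne h] at hk
    simp
  | succ k ih =>
    rw [pow_succ, mul_apply] at hk
    obtain ⟨l, -, hl⟩ := exists_lt_of_sum_lt (f := fun _ => (0 : ℝ)) (by simpa using hk)
    rw [pow_succ]
    exact mul_apply_pos (pow_apply_nonneg hY k) hY
      (ih (pos_of_mul_pos_left hl (hX l j)))
      (hXY l j (pos_of_mul_pos_right hl (pow_apply_nonneg hX k i l)))

end Positivity

section Aggregation

variable {N n : ℕ} (f : Fin N → Fin n) {ν : Fin N → ℝ}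

lemma Agg_apply_nonneg (i : Fin n) (j : Fin N) : 0 ≤ Agg f i j := by
  unfold Agg; split_ifs <;> norm_num

lemma one_vecMul_Agg : (1 : Fin n → ℝ) ᵥ* Agg f = 1 :=
  one_vecMul_eq_one_iff.mpr fun j => by simp [Agg]

lemma Agg_mulVec_apply_pos (hν : ∀ j, 0 < ν j) (j : Fin N) : 0 < (Agg f *ᵥ ν) (f j) :=
  calc 0 < Agg f (f j) j * ν j := by simpa [Agg] using hν j
    _ ≤ ∑ l, Agg f (f j) l * ν l :=
      single_le_sum (f := fun l => Agg f (f j) l * ν l)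
        (fun l _ => mul_nonneg (Agg_apply_nonneg f _ l) (hν l).le) (mem_univ j)

lemma Agg_mulVec_pos (hf : Function.Surjective f) (hν : ∀ j, 0 < ν j) (i : Fin n) :
    0 < (Agg f *ᵥ ν) i := by
  obtain ⟨j, rfl⟩ := hf i
  exact Agg_mulVec_apply_pos f hν j

lemma Disagg_apply_nonneg (hν : ∀ j, 0 ≤ ν j) (j : Fin N) (i : Fin n) :
    0 ≤ Disagg f ν j i := by
  have hAν : 0 ≤ (Agg f *ᵥ ν) i := by
    simp only [mulVec, dotProduct]
    exact sum_nonneg fun l _ => mul_nonneg (Agg_apply_nonneg f i l) (hν l)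
  unfold Disagg
  split_ifs
  · exact div_nonneg (hν j) hAν
  · rfl

lemma Agg_mulVec_apply (i : Fin n) : (Agg f *ᵥ ν) i = ∑ j, if f j = i then ν j else 0 := by
  simp [Agg, mulVec, dotProduct]

lemma Agg_mul_Disagg (hν : ∀ i, (Agg f *ᵥ ν) i ≠ 0) : Agg f * Disagg f ν = 1 := by
  ext i i'
  rcases eq_or_ne i i' with rfl | h
  · simp only [Agg, Disagg, mul_apply, one_apply_eq, ite_mul, one_mul, zero_mul]
    calc _ = (∑ j, if f j = i then ν j else 0) / (Agg f *ᵥ ν) i := by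
          rw [Finset.sum_div]; exact sum_congr rfl fun j _ => by split_ifs <;> simp
      _ = 1 := by rw [← Agg_mulVec_apply, div_self (hν i)]
  · rw [one_apply_ne h, mul_apply]
    refine Finset.sum_eq_zero fun j _ => ?_
    simp only [Agg, Disagg]
    split_ifs <;> simp_all

lemma one_vecMul_Disagg (hν : ∀ i, (Agg f *ᵥ ν) i ≠ 0) :
    (1 : Fin N → ℝ) ᵥ* Disagg f ν = 1 := by
  rw [← one_vecMul_Agg f, vecMul_vecMul, Agg_mul_Disagg f hν, vecMul_one]

lemma Disagg_mulVec_Agg_mulVec (hν : ∀ i, (Agg f *ᵥ ν) i ≠ 0) :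
    Disagg f ν *ᵥ (Agg f *ᵥ ν) = ν := by
  funext j
  simp only [mulVec, dotProduct, Disagg, ite_mul, zero_mul, sum_ite_eq, mem_univ, if_true]
  exact div_mul_cancel₀ _ (hν (f j))

end Aggregation

section CoarseOperator

variable {N n : ℕ} {P : Matrix (Fin N) (Fin N) ℝ} {f : Fin N → Fin n} {ν : Fin N → ℝ}

lemma colStoch_CoarseC (hP : ColStoch P) (hf : Function.Surjective f) (hν : ∀ j, 0 < ν j) :
    ColStoch (CoarseC P f ν) := by
  refine ⟨mul_apply_nonneg (mul_apply_nonneg (Agg_apply_nonneg f) hP.1)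
    (Disagg_apply_nonneg f fun j => (hν j).le), one_vecMul_eq_one_iff.mp ?_⟩
  rw [CoarseC, ← vecMul_vecMul, ← vecMul_vecMul, one_vecMul_Agg, one_vecMul_eq_one_iff.mpr hP.2,
    one_vecMul_Disagg f fun i => (Agg_mulVec_pos f hf hν i).ne']

lemma CoarseC_apply_pos (hP : ∀ i j, 0 ≤ P i j) (hν : ∀ j, 0 < ν j) {j j' : Fin N}
    (h : 0 < P j j') : 0 < CoarseC P f ν (f j) (f j') := by
  have hD : 0 < Disagg f ν j' (f j') := by
    simpa [Disagg] using div_pos (hν j') (Agg_mulVec_apply_pos f hν j')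
  exact mul_apply_pos (mul_apply_nonneg (Agg_apply_nonneg f) hP)
    (Disagg_apply_nonneg f fun j => (hν j).le)
    (mul_apply_pos (Agg_apply_nonneg f) hP (by simp [Agg]) h) hD

lemma irred_CoarseC (hP : ColStoch P) (hirr : Irred P) (hf : Function.Surjective f)
    (hν : ∀ j, 0 < ν j) : Irred (CoarseC P f ν) := by
  intro i i'
  obtain ⟨j, rfl⟩ := hf i
  obtain ⟨j', rfl⟩ := hf i'
  obtain ⟨k, hk, hne⟩ := hirr j j'
  exact ⟨k, hk, (pow_apply_pos_comp f hP.1 (colStoch_CoarseC hP hf hν).1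
    (fun _ _ => CoarseC_apply_pos hP.1 hν) k ((pow_apply_nonneg hP.1 k j j').lt_of_ne' hne)).ne'⟩

end CoarseOperator

section CoarseSystem

variable {N n : ℕ} {P : Matrix (Fin N) (Fin N) ℝ} {f : Fin N → Fin n} {μ ν : Fin N → ℝ}

lemma one_sub_add_vecMulVec_mulVec {m : Type*} [Fintype m] [DecidableEq m] (P : Matrix m m ℝ)
    (μ w : m → ℝ) : (1 - P + vecMulVec μ 1) *ᵥ w = w - P *ᵥ w + (∑ i, w i) • μ := by
  rw [add_mulVec, sub_mulVec, one_mulVec, vecMulVec_mulVec, one_dotProduct, op_smul_eq_smul]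

noncomputable def coarseMat (P : Matrix (Fin N) (Fin N) ℝ) (f : Fin N → Fin n)
    (μ ν : Fin N → ℝ) : Matrix (Fin n) (Fin n) ℝ :=
  Agg f * (1 - P + vecMulVec μ 1) * Disagg f ν

lemma coarseMat_mulVec (hν : ∀ i, (Agg f *ᵥ ν) i ≠ 0) (v : Fin n → ℝ) :
    coarseMat P f μ ν *ᵥ v = v - CoarseC P f ν *ᵥ v + (∑ i, v i) • (Agg f *ᵥ μ) := by
  rw [coarseMat, ← mulVec_mulVec, ← mulVec_mulVec, one_sub_add_vecMulVec_mulVec,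
    sum_mulVec_of_one_vecMul (one_vecMul_Disagg f hν), mulVec_add, mulVec_sub, mulVec_smul,
    mulVec_mulVec, Agg_mul_Disagg f hν, one_mulVec, CoarseC, mulVec_mulVec, mulVec_mulVec]

lemma isUnit_coarseMat (hP : ColStoch P) (hirr : Irred P) (hf : Function.Surjective f)
    (hν : ∀ j, 0 < ν j) (hμ : ∑ i, μ i = 1) : IsUnit (coarseMat P f μ ν) := by
  have hAν : ∀ i, (Agg f *ᵥ ν) i ≠ 0 := fun i => (Agg_mulVec_pos f hf hν i).ne'
  rw [isUnit_iff_isUnit_det, isUnit_iff_ne_zero, Ne, ← exists_mulVec_eq_zero_iff]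
  rintro ⟨v, hv0, hv⟩
  have hC := colStoch_CoarseC hP hf hν
  have hMv := coarseMat_mulVec (μ := μ) (P := P) hAν v
  have hsum : ∑ i, v i = 0 := by
    have := congrArg (fun w => ∑ i, w i) hMv
    simpa [hv, sum_add_distrib, sum_sub_distrib, ← Finset.mul_sum, hμ,
      sum_mulVec_of_one_vecMul (one_vecMul_Agg f),
      sum_mulVec_of_one_vecMul (one_vecMul_eq_one_iff.mpr hC.2)] using this.symm
  rw [hv, hsum, zero_smul, add_zero, eq_comm, sub_eq_zero] at hMv
  exact hv0 <|
    hC.eq_zero_of_mulVec_eq_self_of_sum_eq_zero (irred_CoarseC hP hirr hf hν) hMv.symm hsum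

end CoarseSystem

theorem stmt10_general {N n : ℕ} (P : Matrix (Fin N) (Fin N) ℝ)
    (μ : Fin N → ℝ) (hP : ColStoch P) (hirr : Irred P)
    (hμsum : ∑ i, μ i = 1) (hinv : P.mulVec μ = μ)
    (f : Fin N → Fin n) (hf : Function.Surjective f)
    (μk : Fin N → ℝ) (hμkpos : ∀ i, 0 < μk i)
    (zk : Fin n → ℝ) (hzksum : ∑ i, zk i = 1)
    (hzkinv : (CoarseC P f μk).mulVec zk = zk) :
    (Disagg f μk).mulVec zk - μ = (1 - CoarseS P f μ μk).mulVec (μk - μ) := by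
  have hAμk : ∀ i, (Agg f *ᵥ μk) i ≠ 0 := fun i => (Agg_mulVec_pos f hf hμkpos i).ne'
  set B := Agg f * (1 - P + vecMulVec μ 1)
  set M := coarseMat P f μ μk
  have hM_Aμk : M *ᵥ (Agg f *ᵥ μk) = B *ᵥ μk := by
    rw [show M = B * Disagg f μk from rfl, ← mulVec_mulVec, Disagg_mulVec_Agg_mulVec f hAμk]
  have hM_zk : M *ᵥ zk = B *ᵥ μ := by
    rw [coarseMat_mulVec hAμk, hzkinv, hzksum, sub_self, zero_add, one_smul, ← mulVec_mulVec,
      one_sub_add_vecMulVec_mulVec, hinv, hμsum, sub_self, zero_add, one_smul]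
  have hM : M⁻¹ * M = 1 := nonsing_inv_mul M
    ((isUnit_iff_isUnit_det M).mp (isUnit_coarseMat hP hirr hf hμkpos hμsum))
  change _ = (1 - Disagg f μk * M⁻¹ * B) *ᵥ (μk - μ)
  rw [sub_mulVec, one_mulVec, ← mulVec_mulVec, mulVec_sub B, ← hM_Aμk, ← hM_zk,
    ← mulVec_sub, mulVec_mulVec, Matrix.mul_assoc, hM, Matrix.mul_one, mulVec_sub,
    Disagg_mulVec_Agg_mulVec f hAμk]
  abel

/-- error after the coarse correction step:
`μ^{k+1/2} - μ = (I - S(μ^k))(μ^k - μ)`. -/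
theorem stmt10 {N n : ℕ} (P : Matrix (Fin N) (Fin N) ℝ)
    (μ : Fin N → ℝ) (hP : ColStoch P) (hirr : Irred P)
    (hμpos : ∀ i, 0 < μ i) (hμsum : ∑ i, μ i = 1) (hinv : P.mulVec μ = μ)
    (f : Fin N → Fin n) (hf : Function.Surjective f)
    (μk : Fin N → ℝ) (hμkpos : ∀ i, 0 < μk i) (hμksum : ∑ i, μk i = 1)
    (zk : Fin n → ℝ) (hzk : ∀ i, 0 ≤ zk i) (hzksum : ∑ i, zk i = 1)
    (hzkinv : (CoarseC P f μk).mulVec zk = zk) :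
    (Disagg f μk).mulVec zk - μ = (1 - CoarseS P f μ μk).mulVec (μk - μ) :=
  stmt10_general P μ hP hirr hμsum hinv f hf μk hμkpos zk hzksum hzkinv
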